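/- arXiv:2501.18322 — 10 statements merged into one kernel-verified Lean document; each statement's English description precedes it below -/
import Mathlib

section
/- Let μ = N(α, Σ) be a Gaussian measure on ℝ^d and A = KᵀQ. Then the Softmax self-attention velocity field satisfies Γ_μ(x) = ∫ V·y · e^{Qx·Ky} dμ(y) / ∫ e^{Qx·Ky} dμ(y) = V(α + Σ A x) for all x ∈ ℝ^d. -/
/-!
Since `Qx·Ky = b·y` with `b = Ax`, completing the square turns `e^{b·y}` times the density of
`N(α, Σ)` into a constant multiple of the density of `N(α + Σb, Σ)`. Both integrals are then taken
against this Gaussian, so their ratio is `V` applied to its mean `α + Σb`; the mean is the centre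
because the centred density is even, so its first moment vanishes.
-/

open MeasureTheory Matrix Real

section
variable {E : Type*} [NormedAddCommGroup E] [NormedSpace ℝ E] [FiniteDimensional ℝ E]
  [MeasurableSpace E] [BorelSpace E] (μ : Measure E) [μ.IsAddHaarMeasure]

theorem integrable_norm_pow_mul_exp_neg_mul_sq_norm [Nontrivial E] (n : ℕ) {b : ℝ} (hb : 0 < b) :
    Integrable (fun x : E => ‖x‖ ^ n * exp (-b * ‖x‖ ^ 2)) μ := by
  rw [integrable_fun_norm_addHaar μ (f := fun r => r ^ n * exp (-b * r ^ 2))]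
  refine (integrableOn_rpow_mul_exp_neg_mul_sq hb (s := (Module.finrank ℝ E - 1 + n : ℕ))
    (by norm_cast; lia)).congr_fun (fun y _ => ?_) measurableSet_Ioi
  simp only [rpow_natCast, pow_add, smul_eq_mul, mul_assoc]
end

theorem Matrix.PosDef.exists_mul_norm_sq_le {ι : Type*} [Fintype ι] [Nonempty ι]
    {M : Matrix ι ι ℝ} (hM : M.PosDef) :
    ∃ ε > 0, ∀ z : ι → ℝ, ε * ‖z‖ ^ 2 ≤ z ⬝ᵥ M *ᵥ z := by
  have hq : Continuous fun z : ι → ℝ => z ⬝ᵥ M *ᵥ z := by fun_prop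
  obtain ⟨u, hu, hmin⟩ := (isCompact_sphere (0 : ι → ℝ) 1).exists_isMinOn
    (NormedSpace.sphere_nonempty.2 zero_le_one) hq.continuousOn
  have hu0 : u ≠ 0 := ne_zero_of_mem_unit_sphere ⟨u, hu⟩
  refine ⟨_, by simpa using hM.dotProduct_mulVec_pos hu0, fun z => ?_⟩
  rcases eq_or_ne z 0 with rfl | hz
  · simp
  have hz' : ‖z‖ ≠ 0 := norm_ne_zero_iff.2 hz
  have := isMinOn_iff.1 hmin (‖z‖⁻¹ • z) (by simp [norm_smul, hz'])
  simp only [mulVec_smul, dotProduct_smul, smul_dotProduct, smul_eq_mul] at this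
  calc _ ≤ ‖z‖⁻¹ * (‖z‖⁻¹ * (z ⬝ᵥ M *ᵥ z)) * ‖z‖ ^ 2 := by gcongr
    _ = _ := by field_simp

section
variable {E F : Type*} [NormedAddCommGroup E] [NormedSpace ℝ E] [MeasurableSpace E] [BorelSpace E]
  [NormedAddCommGroup F] [NormedSpace ℝ F] [CompleteSpace F] (μ : Measure E)

theorem integral_smul_self_eq_zero_of_even [μ.IsNegInvariant] {f : E → ℝ} (hf : f.Even) :
    ∫ z, f z • z ∂μ = 0 := by
  have h := integral_neg_eq_self (fun z => f z • z) μ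
  simp only [hf _, smul_neg, integral_neg] at h
  simpa [← two_smul ℝ, eq_neg_iff_add_eq_zero] using h.symm

theorem integral_comp_sub_smul_of_even [CompleteSpace E] [SecondCountableTopology E]
    [μ.IsNegInvariant] [μ.IsAddRightInvariant] {f : E → ℝ} (hf : f.Even)
    (hf_int : Integrable f μ) (hf_int' : Integrable (fun z => f z • z) μ) (L : E →L[ℝ] F) (c : E) :
    ∫ y, f (y - c) • L y ∂μ = (∫ y, f (y - c) ∂μ) • L c := by
  rw [← integral_add_right_eq_self _ c, ← integral_add_right_eq_self (fun y => f (y - c)) c]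
  simp only [add_sub_cancel_right, map_add, smul_add]
  have hL : ∫ z, f z • L z ∂μ = 0 := by
    simp_rw [← map_smul]
    rw [L.integral_comp_comm hf_int', integral_smul_self_eq_zero_of_even μ hf, map_zero]
  rw [integral_add (by simpa only [map_smul] using L.integrable_comp hf_int')
    (hf_int.smul_const _), hL, zero_add, integral_smul_const]
end

/-- Unnormalized density of the centered Gaussian with covariance `M⁻¹`. -/
noncomputable def gaussianKernel {ι : Type*} [Fintype ι] (M : Matrix ι ι ℝ) (z : ι → ℝ) : ℝ :=
  exp (-(1 / 2 : ℝ) * (z ⬝ᵥ M *ᵥ z))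

section gaussianKernel
variable {ι : Type*} [Fintype ι] {M : Matrix ι ι ℝ}

theorem gaussianKernel_nonneg (z : ι → ℝ) : 0 ≤ gaussianKernel M z := (exp_pos _).le

theorem gaussianKernel_even : (gaussianKernel M).Even := by
  intro z
  simp [gaussianKernel, mulVec_neg]

theorem Matrix.PosDef.integrable_norm_pow_mul_gaussianKernel [Nonempty ι] (hM : M.PosDef)
    (n : ℕ) : Integrable (fun z => ‖z‖ ^ n * gaussianKernel M z) := by
  obtain ⟨ε, hε, hle⟩ := hM.exists_mul_norm_sq_le
  refine (integrable_norm_pow_mul_exp_neg_mul_sq_norm volume n (half_pos hε)).mono'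
    (by unfold gaussianKernel; fun_prop) (.of_forall fun z => ?_)
  rw [norm_mul, norm_pow, norm_norm, Real.norm_of_nonneg (gaussianKernel_nonneg z), gaussianKernel]
  gcongr ‖z‖ ^ n * exp ?_
  linarith [hle z]

theorem Matrix.PosDef.integrable_gaussianKernel [Nonempty ι] (hM : M.PosDef) :
    Integrable (gaussianKernel M) := by
  simpa using hM.integrable_norm_pow_mul_gaussianKernel 0

theorem Matrix.PosDef.integrable_gaussianKernel_smul [Nonempty ι] (hM : M.PosDef) :
    Integrable (fun z => gaussianKernel M z • z) := by
  refine (hM.integrable_norm_pow_mul_gaussianKernel 1).mono'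
    (by unfold gaussianKernel; fun_prop) (.of_forall fun z => ?_)
  rw [norm_smul, Real.norm_of_nonneg (gaussianKernel_nonneg z), pow_one, mul_comm]

theorem exp_dotProduct_mul_gaussianKernel_inv [DecidableEq ι] {S : Matrix ι ι ℝ} (hS : S.IsSymm)
    (hdet : IsUnit S.det) (b α y : ι → ℝ) :
    exp (b ⬝ᵥ y) * gaussianKernel S⁻¹ (y - α) =
      exp (b ⬝ᵥ α + (1 / 2 : ℝ) * (b ⬝ᵥ S *ᵥ b)) * gaussianKernel S⁻¹ (y - (α + S *ᵥ b)) := by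
  set w := y - α
  set s := S *ᵥ b
  have hs : S⁻¹ *ᵥ s = b := by rw [mulVec_mulVec, nonsing_inv_mul S hdet, one_mulVec]
  have hsymm : s ⬝ᵥ S⁻¹ *ᵥ w = w ⬝ᵥ S⁻¹ *ᵥ s := by
    rw [dotProduct_mulVec, ← mulVec_transpose, transpose_nonsing_inv, hS.eq, dotProduct_comm]
  have hexpand : (w - s) ⬝ᵥ S⁻¹ *ᵥ (w - s) = w ⬝ᵥ S⁻¹ *ᵥ w - 2 * (b ⬝ᵥ w) + b ⬝ᵥ s := by
    rw [mulVec_sub, sub_dotProduct, dotProduct_sub, dotProduct_sub, hsymm, hs,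
      dotProduct_comm w b, dotProduct_comm s b]
    ring
  have hy : b ⬝ᵥ y = b ⬝ᵥ w + b ⬝ᵥ α := by simp [w, dotProduct_sub]
  rw [gaussianKernel, gaussianKernel, ← exp_add, ← exp_add, ← sub_sub, hexpand, hy]
  ring_nf

end gaussianKernel

/-- For a Gaussian measure `μ = N(α, Σ)` on `ℝ^d` (written here through its unnormalized
density `g` with respect to Lebesgue measure) and `A = KᵀQ`, the Softmax self-attention
velocity field satisfies
`Γ_μ(x) = ∫ V y e^{Qx·Ky} dμ(y) / ∫ e^{Qx·Ky} dμ(y) = V (α + Σ A x)`,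
stated as: numerator = denominator • V(α + ΣAx). -/
theorem stmt_3 (d k : ℕ) (Q K : Matrix (Fin k) (Fin d) ℝ) (V : Matrix (Fin d) (Fin d) ℝ)
    (α : Fin d → ℝ) (S : Matrix (Fin d) (Fin d) ℝ) (hS : S.PosDef)
    (A : Matrix (Fin d) (Fin d) ℝ) (hA : A = Kᵀ * Q)
    (g : (Fin d → ℝ) → ℝ)
    (hg : ∀ y, g y = Real.exp (-(1 / 2 : ℝ) * ((y - α) ⬝ᵥ S⁻¹.mulVec (y - α)))) :
    ∀ x : Fin d → ℝ,
      (∫ y : Fin d → ℝ, (Real.exp (Q.mulVec x ⬝ᵥ K.mulVec y) * g y) • V.mulVec y) =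
        (∫ y : Fin d → ℝ, Real.exp (Q.mulVec x ⬝ᵥ K.mulVec y) * g y) •
          V.mulVec (α + S.mulVec (A.mulVec x)) := by
  intro x
  rcases isEmpty_or_nonempty (Fin d) with hd | hd
  · exact Subsingleton.elim _ _
  have hb (y : Fin d → ℝ) : Q *ᵥ x ⬝ᵥ K *ᵥ y = A *ᵥ x ⬝ᵥ y := by
    rw [dotProduct_mulVec, ← mulVec_transpose, hA, ← mulVec_mulVec]
  have hsq (y : Fin d → ℝ) : exp (Q *ᵥ x ⬝ᵥ K *ᵥ y) * g y =
      exp (A *ᵥ x ⬝ᵥ α + 1 / 2 * (A *ᵥ x ⬝ᵥ S *ᵥ A *ᵥ x)) *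
        gaussianKernel S⁻¹ (y - (α + S *ᵥ A *ᵥ x)) := by
    rw [hg, hb]
    exact exp_dotProduct_mul_gaussianKernel_inv (isHermitian_iff_isSymm.1 hS.isHermitian)
      hS.det_pos.ne'.isUnit _ α y
  simp_rw [hsq, mul_smul, integral_smul, integral_const_mul]
  rw [mul_smul]
  exact congrArg _ <| integral_comp_sub_smul_of_even volume gaussianKernel_even
    hS.inv.integrable_gaussianKernel hS.inv.integrable_gaussianKernel_smul
    (mulVecLin V).toContinuousLinearMap _
end

section
/- Let A, V ∈ ℝ^{d×d}, Σ₀ ≻ 0 positive definite, and assume V commutes with Σ₀ and with VA + AᵀVᵀ. Then Σ(t) = (Σ₀⁻¹ − t(VA + AᵀVᵀ))⁻¹ solves the matrix ODE Σ̇ = VΣAΣ + ΣAᵀΣVᵀ with Σ(0) = Σ₀, on the interval where Σ₀⁻¹ − t(VA + AᵀVᵀ) is invertible. -/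
open Matrix

/-!
Writing `B(t) = Σ₀⁻¹ - t M`, the curve `Σ(t) = B(t)⁻¹` is the inverse of an affine curve, so
`Σ̇ = -Σ Ḃ Σ = Σ M Σ`. Since `V` commutes with `Σ₀` and `M`, it commutes with `B(t)` and hence
with `Σ(t)`; as `Σ(t)` is symmetric, `Vᵀ` commutes with it as well, which turns
`Σ (VA + AᵀVᵀ) Σ` into `VΣAΣ + ΣAᵀΣVᵀ`.
-/

namespace Matrix

variable {n α : Type*} [Fintype n] [DecidableEq n] [CommRing α]

theorem Commute.nonsing_inv_right {A B : Matrix n n α} (h : Commute A B) : Commute A B⁻¹ := by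
  simpa only [zpow_neg_one] using Commute.zpow_right h (-1)

theorem mul_add_transpose_mul_of_commute {P V A : Matrix n n α} (hP : P.IsSymm)
    (hVP : Commute V P) : P * (V * A + (V * A)ᵀ) * P = V * P * A * P + P * Aᵀ * P * Vᵀ := by
  have hVtP : P * Vᵀ = Vᵀ * P := by
    simpa only [transpose_mul, hP.eq] using congrArg transpose hVP.eq
  simp only [transpose_mul, mul_add, add_mul, ← Matrix.mul_assoc, hVP.eq]
  simp only [Matrix.mul_assoc, hVtP]

end Matrix

section Derivative

variable {𝕜 n : Type*} [RCLike 𝕜] [Fintype n] [DecidableEq n]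

-- The norm is only needed for the derivative of `Ring.inverse`; `HasDerivAt` itself depends on
-- the (product) topology alone, so the statements below do not depend on this choice.
attribute [local instance] Matrix.linftyOpNormedRing Matrix.linftyOpNormedAlgebra

theorem HasDerivAt.matrix_inv {F : 𝕜 → Matrix n n 𝕜} {F' : Matrix n n 𝕜} {t : 𝕜}
    (hF : HasDerivAt F F' t) (ht : IsUnit (F t)) :
    HasDerivAt (fun τ => (F τ)⁻¹) (-((F t)⁻¹ * F' * (F t)⁻¹)) t := by
  obtain ⟨u, hu⟩ := ht
  have hinv : HasFDerivAt Ring.inverse (-ContinuousLinearMap.mulLeftRight 𝕜 _ ↑u⁻¹ ↑u⁻¹) (F t) :=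
    hu ▸ hasFDerivAt_ringInverse u
  have h := hinv.comp_hasDerivAt t hF
  simp only [_root_.neg_apply, ContinuousLinearMap.mulLeftRight_apply] at h
  simp only [nonsing_inv_eq_ringInverse, ← hu, Ring.inverse_unit]
  exact h

theorem Matrix.hasDerivAt_inv_sub_smul_apply {S M : Matrix n n 𝕜} {t : 𝕜}
    (ht : IsUnit (S - t • M)) (i j : n) :
    HasDerivAt (fun τ => (S - τ • M)⁻¹ i j) (((S - t • M)⁻¹ * M * (S - t • M)⁻¹) i j) t := by
  have hF : HasDerivAt (fun τ : 𝕜 => S - τ • M) (-M) t := by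
    have h := ((hasDerivAt_id t).smul_const M).const_sub S
    simp only [id, one_smul] at h
    exact h
  have h := (entryLinearMap 𝕜 𝕜 i j).toContinuousLinearMap.hasFDerivAt.comp_hasDerivAt t
    (hF.matrix_inv ht)
  simp only [mul_neg, neg_mul, neg_neg] at h
  exact h

end Derivative

/-- If `V` commutes with `Σ₀ ≻ 0` and with `M := VA + AᵀVᵀ`, then
`Σ(t) = (Σ₀⁻¹ − t M)⁻¹` solves the matrix ODE `Σ̇ = VΣAΣ + ΣAᵀΣVᵀ`, `Σ(0) = Σ₀`,
(entrywise derivatives) on the set of times where `Σ₀⁻¹ − t M` is invertible. -/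
theorem stmt_4 (d : ℕ) (A V S₀ : Matrix (Fin d) (Fin d) ℝ) (hS₀ : S₀.PosDef)
    (M : Matrix (Fin d) (Fin d) ℝ) (hM : M = V * A + (V * A)ᵀ)
    (hcomm₁ : V * S₀ = S₀ * V) (hcomm₂ : V * M = M * V) :
    (S₀⁻¹ - (0 : ℝ) • M)⁻¹ = S₀ ∧
    ∀ t : ℝ, IsUnit (S₀⁻¹ - t • M) →
      ∀ i j : Fin d,
        HasDerivAt (fun τ : ℝ => ((S₀⁻¹ - τ • M)⁻¹) i j)
          ((V * (S₀⁻¹ - t • M)⁻¹ * A * (S₀⁻¹ - t • M)⁻¹ +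
            (S₀⁻¹ - t • M)⁻¹ * Aᵀ * (S₀⁻¹ - t • M)⁻¹ * Vᵀ) i j) t := by
  refine ⟨by simp [nonsing_inv_nonsing_inv S₀ ((isUnit_iff_isUnit_det S₀).mp hS₀.isUnit)],
    fun t ht i j => ?_⟩
  subst hM
  have hsymm : (S₀⁻¹ - t • (V * A + (V * A)ᵀ))⁻¹.IsSymm :=
    ((isHermitian_iff_isSymm.mp hS₀.isHermitian).inv.sub
      ((isSymm_add_transpose_self (V * A)).smul t)).inv
  have hcomm : Commute V (S₀⁻¹ - t • (V * A + (V * A)ᵀ))⁻¹ :=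
    Commute.nonsing_inv_right <|
      (Commute.nonsing_inv_right hcomm₁).sub_right (Commute.smul_right hcomm₂ t)
  have h := hasDerivAt_inv_sub_smul_apply ht i j
  rwa [mul_add_transpose_mul_of_commute hsymm hcomm] at h
end

section
/- Let A, V ∈ ℝ^{d×d} with V commuting with Σ₀ ≻ 0 and with M := VA + AᵀVᵀ. If M ⪯ 0 (negative semidefinite), then Σ(t) = (Σ₀⁻¹ − tM)⁻¹ is defined for all t ≥ 0 and converges as t → +∞ to a positive semidefinite limit Σ* whose rank is at most the multiplicity of 0 as an eigenvalue of M; in particular λ_i(Σ*) = 0 for every index i with λ_i(M) < 0. -/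
/-!
With `R = S₀^{1/2}` and `B = R (-M) R ⪰ 0` one has `(S₀⁻¹ - t M)⁻¹ = R (1 + t B)⁻¹ R`.
In an eigenbasis of `B` the middle factor is diagonal with entries `(1 + t μ)⁻¹`, which tend to
`1` for `μ = 0` and to `0` for `μ > 0`. Hence `(1 + t B)⁻¹` tends to the orthogonal projection
onto `ker B`, a positive semidefinite matrix of rank `d - rank B = d - rank M`.
-/

open Matrix Filter Topology
open scoped MatrixOrder ComplexOrder

theorem tendsto_inv_one_add_mul_atTop {x : ℝ} (hx : 0 ≤ x) :
    Tendsto (fun t : ℝ => (1 + t * x)⁻¹) atTop (𝓝 (({0} : Set ℝ).indicator 1 x)) := by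
  rcases hx.eq_or_lt with rfl | hx
  · simp
  · rw [Set.indicator_of_notMem (show x ∉ ({0} : Set ℝ) from hx.ne')]
    exact (tendsto_atTop_add_const_left _ _ (tendsto_id.atTop_mul_const hx)).inv_tendsto_atTop

namespace Matrix

variable {n 𝕜 : Type*} [Fintype n] [DecidableEq n] [RCLike 𝕜] {B : Matrix n n 𝕜}

theorem PosSemidef.inv_one_add_smul_eq_cfc (hB : B.PosSemidef) {t : ℝ} (ht : 0 ≤ t) :
    (1 + t • B)⁻¹ = cfc (fun x : ℝ => (1 + t * x)⁻¹) B := by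
  have hB₀ : 0 ≤ B := nonneg_iff_posSemidef.mpr hB
  have hfin := B.finite_real_spectrum
  have hlin : 1 + t • B = cfc (fun x : ℝ => 1 + t * x) B := by
    rw [cfc_const_add 1 (fun x => t * x) B, cfc_const_mul_id t B, Algebra.algebraMap_eq_smul_one,
      one_smul]
  refine inv_eq_right_inv ?_
  rw [hlin, ← cfc_mul _ _ B (hfin.continuousOn _) (hfin.continuousOn _), ← cfc_one ℝ B]
  refine cfc_congr fun x hx => ?_
  exact mul_inv_cancel₀ (add_pos_of_pos_of_nonneg one_pos
    (mul_nonneg ht (spectrum_nonneg_of_nonneg hB₀ hx))).ne'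

theorem PosSemidef.tendsto_inv_one_add_smul (hB : B.PosSemidef) :
    Tendsto (fun t : ℝ => (1 + t • B)⁻¹) atTop (𝓝 (cfc (({0} : Set ℝ).indicator 1) B)) := by
  have hB₀ : 0 ≤ B := nonneg_iff_posSemidef.mpr hB
  have hfin := B.finite_real_spectrum
  refine (tendsto_cfc_fun ?_ (.of_forall fun t => hfin.continuousOn _)).congr'
    ((eventually_ge_atTop 0).mono fun t ht => (hB.inv_one_add_smul_eq_cfc ht).symm)
  rw [Metric.tendstoUniformlyOn_iff]
  intro ε hε
  refine hfin.eventually_all.2 fun x hx => ?_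
  have := tendsto_inv_one_add_mul_atTop (spectrum_nonneg_of_nonneg hB₀ hx)
  exact (Metric.tendsto_nhds.1 this ε hε).mono fun t h => by rwa [dist_comm]

theorem IsHermitian.rank_cfc_indicator_zero_add_rank (hB : B.IsHermitian) :
    (cfc (({0} : Set ℝ).indicator 1) B).rank + B.rank = Fintype.card n := by
  rw [hB.cfc_eq, IsHermitian.cfc, Unitary.conjStarAlgAut_apply, ← Unitary.coe_star,
    rank_mul_eq_left_of_isUnit_det _ _ (UnitaryGroup.det_isUnit (star hB.eigenvectorUnitary)),
    rank_mul_eq_right_of_isUnit_det _ _ (UnitaryGroup.det_isUnit hB.eigenvectorUnitary),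
    rank_diagonal, hB.rank_eq_card_non_zero_eigs]
  have hker : ∀ i, (RCLike.ofReal ∘ ({0} : Set ℝ).indicator 1 ∘ hB.eigenvalues) i ≠ (0 : 𝕜) ↔
      ¬hB.eigenvalues i ≠ 0 := fun i => by
    by_cases h : hB.eigenvalues i = 0 <;> simp [h]
  rw [Fintype.card_congr (Equiv.subtypeEquivRight hker), Fintype.card_subtype_compl]
  have := Fintype.card_subtype_le fun i => hB.eigenvalues i ≠ 0
  omega

theorem posSemidef_cfc_indicator_zero (B : Matrix n n 𝕜) :
    (cfc (({0} : Set ℝ).indicator 1) B).PosSemidef :=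
  nonneg_iff_posSemidef.mp (cfc_nonneg fun x _ => Set.indicator_nonneg (fun _ _ => zero_le_one) x)

theorem rank_neg {m R : Type*} [Fintype m] [CommRing R] (A : Matrix m n R) :
    (-A).rank = A.rank := by
  have hA : -A = A * -(1 : Matrix n n R) := by rw [Matrix.mul_neg, Matrix.mul_one]
  rw [hA, rank_mul_eq_left_of_isUnit_det _ _
    ((isUnit_iff_isUnit_det (-1 : Matrix n n R)).mp isUnit_one.neg)]

theorem inv_mul_self_inv_add_smul {K : Type*} [CommRing K] {R : Matrix n n K} (hR : IsUnit R.det)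
    (N : Matrix n n K) (t : K) :
    ((R * R)⁻¹ + t • N)⁻¹ = R * (1 + t • (R * N * R))⁻¹ * R := by
  have hconj : (R * R)⁻¹ + t • N = R⁻¹ * (1 + t • (R * N * R)) * R⁻¹ := by
    simp only [Matrix.mul_add, Matrix.add_mul, Matrix.mul_smul, Matrix.smul_mul, Matrix.mul_one,
      ← Matrix.mul_assoc, nonsing_inv_mul _ hR, Matrix.one_mul]
    simp only [Matrix.mul_assoc, mul_nonsing_inv _ hR, Matrix.mul_one, Matrix.mul_inv_rev]
  rw [hconj, Matrix.mul_inv_rev, Matrix.mul_inv_rev, nonsing_inv_nonsing_inv _ hR]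
  simp only [Matrix.mul_assoc]

end Matrix

theorem stmt_5_general (d : ℕ) (S₀ : Matrix (Fin d) (Fin d) ℝ) (hS₀ : S₀.PosDef)
    (M : Matrix (Fin d) (Fin d) ℝ)
    (hneg : (-M).PosSemidef) :
    (∀ t : ℝ, 0 ≤ t → IsUnit (S₀⁻¹ - t • M)) ∧
    ∃ Sstar : Matrix (Fin d) (Fin d) ℝ, Sstar.PosSemidef ∧
      (∀ i j : Fin d,
        Tendsto (fun t : ℝ => ((S₀⁻¹ - t • M)⁻¹) i j) atTop (nhds (Sstar i j))) ∧
      Sstar.rank + M.rank ≤ d := by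
  set R := CFC.sqrt S₀
  have hRR : R * R = S₀ := CFC.sqrt_mul_sqrt_self S₀ hS₀.posSemidef.nonneg
  have hRsymm : Rᴴ = R := (nonneg_iff_posSemidef.mp (CFC.sqrt_nonneg S₀)).1
  have hRdet : IsUnit R.det :=
    (isUnit_iff_isUnit_det R).mp ((CFC.isUnit_sqrt_iff S₀ hS₀.posSemidef.nonneg).mpr hS₀.isUnit)
  set B := R * -M * R
  have hB : B.PosSemidef := by
    have := hneg.conjTranspose_mul_mul_same R
    rwa [hRsymm] at this
  set P := cfc (({0} : Set ℝ).indicator 1) B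
  have hconj (t : ℝ) : (S₀⁻¹ - t • M)⁻¹ = R * (1 + t • B)⁻¹ * R := by
    rw [← inv_mul_self_inv_add_smul hRdet, hRR, smul_neg, sub_eq_add_neg]
  refine ⟨fun t ht => ?_, R * P * R, ?_, ?_, ?_⟩
  · rw [sub_eq_add_neg, ← smul_neg]
    exact (hS₀.inv.add_posSemidef (hneg.smul ht)).isUnit
  · have := (posSemidef_cfc_indicator_zero B).conjTranspose_mul_mul_same R
    rwa [hRsymm] at this
  · have hlim : Tendsto (fun t : ℝ => (S₀⁻¹ - t • M)⁻¹) atTop (𝓝 (R * P * R)) := by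
      simp_rw [hconj]
      exact (hB.tendsto_inv_one_add_smul.const_mul R).mul_const R
    exact fun i j => tendsto_pi_nhds.1 (tendsto_pi_nhds.1 hlim i) j
  · have hrank : B.rank = M.rank := by
      rw [rank_mul_eq_left_of_isUnit_det _ _ hRdet, rank_mul_eq_right_of_isUnit_det _ _ hRdet,
        rank_neg]
    rw [rank_mul_eq_left_of_isUnit_det _ _ hRdet, rank_mul_eq_right_of_isUnit_det _ _ hRdet,
      ← hrank, hB.1.rank_cfc_indicator_zero_add_rank, Fintype.card_fin]

/-- If `V` commutes with `Σ₀ ≻ 0` and with `M := VA + AᵀVᵀ`, and `M ⪯ 0`, then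
`Σ(t) = (Σ₀⁻¹ − t M)⁻¹` is defined for all `t ≥ 0` and converges entrywise, as `t → ∞`,
to a positive semidefinite limit `Σ*` whose rank is at most the multiplicity of `0` as an
eigenvalue of `M` (equivalently, `rank Σ* + rank M ≤ d`). -/
theorem stmt_5 (d : ℕ) (A V S₀ : Matrix (Fin d) (Fin d) ℝ) (hS₀ : S₀.PosDef)
    (M : Matrix (Fin d) (Fin d) ℝ) (hM : M = V * A + (V * A)ᵀ)
    (hcomm₁ : V * S₀ = S₀ * V) (hcomm₂ : V * M = M * V)
    (hneg : (-M).PosSemidef) :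
    (∀ t : ℝ, 0 ≤ t → IsUnit (S₀⁻¹ - t • M)) ∧
    ∃ Sstar : Matrix (Fin d) (Fin d) ℝ, Sstar.PosSemidef ∧
      (∀ i j : Fin d,
        Tendsto (fun t : ℝ => ((S₀⁻¹ - t • M)⁻¹) i j) atTop (nhds (Sstar i j))) ∧
      Sstar.rank + M.rank ≤ d :=
  stmt_5_general d S₀ hS₀ M hneg
end

section
/- Let A, V ∈ ℝ^{d×d} with V commuting with Σ₀ ≻ 0 and with M := VA + AᵀVᵀ. If M has a positive eigenvalue, then the solution Σ(t) = (Σ₀⁻¹ − tM)⁻¹ of Σ̇ = VΣAΣ + ΣAᵀΣVᵀ blows up in finite time: there exists T ≤ λ_max(Σ₀⁻¹)/λ_max(M) such that the smallest eigenvalue of Σ₀⁻¹ − tM reaches 0 by time T, so Σ(t) is not defined past T. -/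
/-!
Write `Σ₀⁻¹ = B * B` with `B = √(Σ₀⁻¹)` and `M = B * N * B` with `N = B⁻¹ * M * B⁻¹`. Then
`Σ₀⁻¹ - t • M = B * (1 - t • N) * B` is singular at `t = 1 / λ_max(N)`. In the Loewner order
`N ≤ λ_max(N) • 1`, so `M ≤ λ_max(N) • Σ₀⁻¹ ≤ (λ_max(N) * λ_max(Σ₀⁻¹)) • 1`; as `λ_max(M) > 0`,
this forces `λ_max(N) > 0` and `λ_max(M) ≤ λ_max(N) * λ_max(Σ₀⁻¹)`, which is the bound on `t`.
-/

open Matrix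

namespace Matrix

open scoped MatrixOrder ComplexOrder

variable {n : Type*} [Fintype n] [DecidableEq n]

theorem IsHermitian.iSup_eigenvalues_le_iff {𝕜 : Type*} [RCLike 𝕜] [Nonempty n]
    {A : Matrix n n 𝕜} (hA : A.IsHermitian) {r : ℝ} :
    ⨆ i, hA.eigenvalues i ≤ r ↔ A ≤ algebraMap ℝ (Matrix n n 𝕜) r := by
  rw [ciSup_le_iff (Set.finite_range _).bddAbove, le_algebraMap_iff_spectrum_le hA.isSelfAdjoint,
    hA.spectrum_real_eq_range_eigenvalues, Set.forall_mem_range]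

theorem IsHermitian.iSup_eigenvalues_mem_spectrum {𝕜 : Type*} [RCLike 𝕜] [Nonempty n]
    {A : Matrix n n 𝕜} (hA : A.IsHermitian) : ⨆ i, hA.eigenvalues i ∈ spectrum ℝ A := by
  rw [hA.spectrum_real_eq_range_eigenvalues]
  exact (Set.range_nonempty _).csSup_mem (Set.finite_range _)

theorem det_algebraMap_sub_eq_zero_of_mem_spectrum {K : Type*} [Field K] {A : Matrix n n K}
    {r : K} (hr : r ∈ spectrum K A) : (algebraMap K (Matrix n n K) r - A).det = 0 := by
  rwa [spectrum.mem_iff, isUnit_iff_isUnit_det, isUnit_iff_ne_zero, not_not] at hr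

theorem det_mul_self_sub_inv_smul_mul_mul_eq_zero {K : Type*} [Field K] (B : Matrix n n K)
    {N : Matrix n n K} {r : K} (hr : r ∈ spectrum K N) (hr₀ : r ≠ 0) :
    (B * B - r⁻¹ • (B * N * B)).det = 0 := by
  have hfactor : B * B - r⁻¹ • (B * N * B) = r⁻¹ • (B * (algebraMap K _ r - N) * B) := by
    rw [Algebra.algebraMap_eq_smul_one, mul_sub, sub_mul, mul_smul_comm, smul_mul_assoc, mul_one,
      smul_sub, smul_smul, inv_mul_cancel₀ hr₀, one_smul]
  rw [hfactor, det_smul, det_mul, det_mul, det_algebraMap_sub_eq_zero_of_mem_spectrum hr]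
  simp

theorem PosDef.exists_isHermitian_isUnit_mul_self_eq {𝕜 : Type*} [RCLike 𝕜] {P : Matrix n n 𝕜}
    (hP : P.PosDef) : ∃ B : Matrix n n 𝕜, B.IsHermitian ∧ IsUnit B.det ∧ B * B = P :=
  ⟨CFC.sqrt P, (CFC.sqrt_nonneg P).posSemidef.isHermitian,
    (isUnit_iff_isUnit_det _).mp hP.isStrictlyPositive.sqrt.isUnit,
    CFC.sqrt_mul_sqrt_self P hP.posSemidef.nonneg⟩

theorem IsHermitian.iSup_eigenvalues_pos_and_le_of_congr [Nonempty n] {B N P M : Matrix n n ℝ}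
    (hB : B.IsHermitian) (hN : N.IsHermitian) (hP : P.IsHermitian) (hM : M.IsHermitian)
    (hBB : B * B = P) (hBNB : B * N * B = M) (hμ : 0 < ⨆ i, hM.eigenvalues i) :
    0 < ⨆ i, hN.eigenvalues i ∧
      ⨆ i, hM.eigenvalues i ≤ (⨆ i, hN.eigenvalues i) * ⨆ i, hP.eigenvalues i := by
  set ν := ⨆ i, hN.eigenvalues i
  have hP₀ : 0 ≤ P := by
    simpa only [← hBB, hB.isSelfAdjoint.star_eq] using star_mul_self_nonneg B
  have hMν : M ≤ ν • P := by
    have hconj : B * algebraMap ℝ _ ν * B = ν • P := by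
      rw [Algebra.algebraMap_eq_smul_one, mul_smul_comm, mul_one, smul_mul_assoc, hBB]
    rw [← hBNB, ← hconj]
    exact hB.isSelfAdjoint.conjugate_le_conjugate (hN.iSup_eigenvalues_le_iff.mp le_rfl)
  have hν : 0 < ν := by
    by_contra! hν
    have hM₀ : M ≤ algebraMap ℝ _ 0 := by
      rw [map_zero]
      exact hMν.trans (smul_nonpos_of_nonpos_of_nonneg hν hP₀)
    exact (hM.iSup_eigenvalues_le_iff.mpr hM₀).not_gt hμ
  refine ⟨hν, hM.iSup_eigenvalues_le_iff.mpr ?_⟩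
  rw [map_mul, Algebra.algebraMap_eq_smul_one ν, smul_mul_assoc, one_mul]
  exact hMν.trans (smul_le_smul_of_nonneg_left (hP.iSup_eigenvalues_le_iff.mp le_rfl) hν.le)

theorem PosDef.exists_det_sub_smul_eq_zero {P M : Matrix n n ℝ} (hP : P.PosDef)
    (hM : M.IsHermitian) (hμ : 0 < ⨆ i, hM.eigenvalues i) :
    ∃ T : ℝ, 0 < T ∧ T * (⨆ i, hM.eigenvalues i) ≤ ⨆ i, hP.isHermitian.eigenvalues i ∧
      (P - T • M).det = 0 := by
  have : Nonempty n := by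
    by_contra h
    rw [not_nonempty_iff] at h
    simp at hμ
  obtain ⟨B, hB, hBu, hBB⟩ := hP.exists_isHermitian_isUnit_mul_self_eq
  have hN : (B⁻¹ * M * B⁻¹).IsHermitian := by
    simpa only [conjTranspose_nonsing_inv, hB.eq] using isHermitian_conjTranspose_mul_mul B⁻¹ hM
  have hBNB : B * (B⁻¹ * M * B⁻¹) * B = M := by
    rw [← mul_assoc, ← mul_assoc, mul_nonsing_inv B hBu, one_mul, mul_assoc,
      nonsing_inv_mul B hBu, mul_one]
  obtain ⟨hν, hμν⟩ :=
    hB.iSup_eigenvalues_pos_and_le_of_congr hN hP.isHermitian hM hBB hBNB hμ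
  refine ⟨(⨆ i, hN.eigenvalues i)⁻¹, inv_pos.mpr hν, (inv_mul_le_iff₀ hν).mpr hμν, ?_⟩
  rw [← hBB]
  nth_rw 2 [← hBNB]
  exact det_mul_self_sub_inv_smul_mul_mul_eq_zero B hN.iSup_eigenvalues_mem_spectrum hν.ne'

end Matrix

theorem stmt_6_general (d : ℕ) (S₀ : Matrix (Fin d) (Fin d) ℝ) (hS₀ : S₀.PosDef)
    (M : Matrix (Fin d) (Fin d) ℝ)
    (hMh : M.IsHermitian)
    (hpos : 0 < ⨆ i, hMh.eigenvalues i) :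
    ∃ T : ℝ, 0 ≤ T ∧
      T ≤ (⨆ i, (hS₀.inv.isHermitian).eigenvalues i) / (⨆ i, hMh.eigenvalues i) ∧
      (S₀⁻¹ - T • M).det = 0 := by
  obtain ⟨T, hT, hTμ, hdet⟩ := hS₀.inv.exists_det_sub_smul_eq_zero hMh hpos
  exact ⟨T, hT.le, (le_div_iff₀ hpos).mpr hTμ, hdet⟩

/-- If `V` commutes with `Σ₀ ≻ 0` and with `M := VA + AᵀVᵀ`, and `M` has a positive
eigenvalue, then the solution `Σ(t) = (Σ₀⁻¹ − t M)⁻¹` of `Σ̇ = VΣAΣ + ΣAᵀΣVᵀ` blows up in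
finite time: there is `T ≤ λ_max(Σ₀⁻¹)/λ_max(M)` at which `Σ₀⁻¹ − T M` becomes singular. -/
theorem stmt_6 (d : ℕ) (A V S₀ : Matrix (Fin d) (Fin d) ℝ) (hS₀ : S₀.PosDef)
    (M : Matrix (Fin d) (Fin d) ℝ) (hM : M = V * A + (V * A)ᵀ)
    (hMh : M.IsHermitian)
    (hcomm₁ : V * S₀ = S₀ * V) (hcomm₂ : V * M = M * V)
    (hpos : 0 < ⨆ i, hMh.eigenvalues i) :
    ∃ T : ℝ, 0 ≤ T ∧
      T ≤ (⨆ i, (hS₀.inv.isHermitian).eigenvalues i) / (⨆ i, hMh.eigenvalues i) ∧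
      (S₀⁻¹ - T • M).det = 0 :=
  stmt_6_general d S₀ hS₀ M hMh hpos
end

section
/- Let A, V ∈ ℝ^{d×d} and u ∈ ℝ^d. The rank-one matrix Σ = uuᵀ satisfies VΣAΣ + ΣAᵀΣVᵀ = 0 if and only if Vu = 0 or uᵀ(A + Aᵀ)u = 0. -/
open Matrix

/-!
Since `Σ = uuᵀ` has rank one, `ΣMΣ = (uᵀMu) Σ` for every `M`, so with `c = uᵀAu` and `w = Vu`
the right-hand side collapses to `c (wuᵀ + uwᵀ)`, while `uᵀ(A + Aᵀ)u = 2c`. The symmetrised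
product `wuᵀ + uwᵀ` vanishes only if `w = 0` or `u = 0`, and `u = 0` forces `c = 0`.
-/

namespace Matrix

variable {l m n R : Type*}

theorem vecMulVec_add_vecMulVec_swap_eq_zero_iff [CommRing R] [IsDomain R] [NeZero (2 : R)]
    {w u : n → R} : vecMulVec w u + vecMulVec u w = 0 ↔ w = 0 ∨ u = 0 := by
  refine ⟨fun h => ?_, by rintro (rfl | rfl) <;> simp⟩
  have hsym (i j : n) : w i * u j + u i * w j = 0 := by
    simpa [vecMulVec_apply] using congrFun (congrFun h i) j
  have hdiag (i : n) : w i * u i = 0 := by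
    have : 2 * (w i * u i) = 0 := by linear_combination hsym i i
    exact (mul_eq_zero.mp this).resolve_left two_ne_zero
  have hoff (i j : n) : w i * u j = 0 := by
    -- `(w i u j)² = - (w i u i)(w j u j)` by the symmetry relation.
    have : (w i * u j) ^ 2 = 0 := by
      linear_combination (w i * u j) * hsym i j - (w j * u j) * hdiag i
    exact pow_eq_zero_iff two_ne_zero |>.mp this
  rw [← vecMulVec_eq_zero]
  ext i j
  exact hoff i j

variable [Fintype n] [CommSemiring R]

theorem dotProduct_transpose_mulVec_self (A : Matrix n n R) (u : n → R) :
    u ⬝ᵥ Aᵀ *ᵥ u = u ⬝ᵥ A *ᵥ u := by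
  rw [mulVec_transpose, dotProduct_comm, ← dotProduct_mulVec]

theorem dotProduct_add_transpose_mulVec_self (A : Matrix n n R) (u : n → R) :
    u ⬝ᵥ (A + Aᵀ) *ᵥ u = 2 * (u ⬝ᵥ A *ᵥ u) := by
  rw [add_mulVec, dotProduct_add, dotProduct_transpose_mulVec_self, two_mul]

theorem vecMulVec_mul_mul_vecMulVec (x : l → R) (v w : n → R) (y : m → R) (M : Matrix n n R) :
    vecMulVec x v * M * vecMulVec w y = (v ⬝ᵥ M *ᵥ w) • vecMulVec x y := by
  rw [vecMulVec_mul, vecMulVec_mul_vecMulVec, dotProduct_mulVec, vecMulVec_smul]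

theorem mul_vecMulVec_self_mul_add_eq (A V : Matrix n n R) (u : n → R) :
    V * vecMulVec u u * A * vecMulVec u u + vecMulVec u u * Aᵀ * vecMulVec u u * Vᵀ =
      (u ⬝ᵥ A *ᵥ u) • (vecMulVec (V *ᵥ u) u + vecMulVec u (V *ᵥ u)) := by
  rw [mul_vecMulVec V u u, vecMulVec_mul_mul_vecMulVec, vecMulVec_mul_mul_vecMulVec, smul_mul,
    vecMulVec_mul, vecMul_transpose, dotProduct_transpose_mulVec_self, smul_add]

end Matrix

/-- The rank-one matrix `Σ = uuᵀ` is a stationary point of `Σ̇ = VΣAΣ + ΣAᵀΣVᵀ` if and only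
if `Vu = 0` or `uᵀ(A + Aᵀ)u = 0`. -/
theorem stmt_8 (d : ℕ) (A V : Matrix (Fin d) (Fin d) ℝ) (u : Fin d → ℝ) :
    V * vecMulVec u u * A * vecMulVec u u +
      vecMulVec u u * Aᵀ * vecMulVec u u * Vᵀ = 0 ↔
    V.mulVec u = 0 ∨ u ⬝ᵥ (A + Aᵀ).mulVec u = 0 := by
  rw [mul_vecMulVec_self_mul_add_eq, dotProduct_add_transpose_mulVec_self, smul_eq_zero,
    vecMulVec_add_vecMulVec_swap_eq_zero_iff, mul_eq_zero, or_iff_right two_ne_zero]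
  rcases eq_or_ne u 0 with rfl | hu
  · simp
  · rw [or_iff_left hu, or_comm]
end

section
/- Let A ∈ ℝ^{d×d} be symmetric and Σ ∈ ℝ^{d×d} symmetric with ΣAΣ = 0 (equivalently, Σ is a stationary point of Σ̇ = ΣAΣ + ΣAΣ with V = I_d). Then rank(Σ) ≤ dim ker(A) + min(p, q), where p and q are the numbers of positive and negative eigenvalues of A respectively. -/
/-!
Since `S` is symmetric, `(S u) ⬝ A (S u) = u ⬝ (S A S) u = 0`, so the quadratic form of `A`
vanishes on the range of `S`. In eigencoordinates of `A` this form is `∑ λᵢ yᵢ²`, which is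
definite on the coordinates with `λᵢ > 0` (resp. `λᵢ < 0`); hence the range of `S` injects into
the coordinates with `λᵢ ≤ 0` (resp. `λᵢ ≥ 0`), giving `rank S ≤ dim ker A + q` and
`rank S ≤ dim ker A + p`.
-/

open Matrix

theorem finrank_le_card_nonneg_of_sum_mul_sq_nonneg {ι : Type*} [Fintype ι] (μ : ι → ℝ)
    (W : Submodule ℝ (ι → ℝ)) (hW : ∀ x ∈ W, 0 ≤ ∑ i, μ i * x i ^ 2) :
    Module.finrank ℝ W ≤ Fintype.card {i // 0 ≤ μ i} := by
  let restrict : (ι → ℝ) →ₗ[ℝ] ({i // 0 ≤ μ i} → ℝ) := LinearMap.funLeft ℝ ℝ Subtype.val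
  have hinj : Function.Injective (restrict ∘ₗ W.subtype) := by
    rw [← LinearMap.ker_eq_bot, LinearMap.ker_eq_bot']
    rintro ⟨x, hx⟩ hrestrict
    have hzero : ∀ i, 0 ≤ μ i → x i = 0 := fun i hi => congrFun hrestrict ⟨i, hi⟩
    have hterm_nonpos : ∀ i ∈ Finset.univ, μ i * x i ^ 2 ≤ 0 := fun i _ => by
      by_cases hi : 0 ≤ μ i
      · simp [hzero i hi]
      · exact mul_nonpos_of_nonpos_of_nonneg (not_le.mp hi).le (sq_nonneg _)
    have hterm_zero := (Finset.sum_eq_zero_iff_of_nonpos hterm_nonpos).mp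
      (le_antisymm (Finset.sum_nonpos hterm_nonpos) (hW x hx))
    ext i
    by_cases hi : 0 ≤ μ i
    · exact hzero i hi
    · simpa [(not_le.mp hi).ne] using hterm_zero i (Finset.mem_univ i)
  simpa using LinearMap.finrank_le_finrank_of_injective hinj

theorem Fintype.card_nonneg_eq_card_zero_add_card_pos {ι : Type*} [Fintype ι] (μ : ι → ℝ) :
    Fintype.card {i // 0 ≤ μ i} = Fintype.card {i // μ i = 0} + Fintype.card {i // 0 < μ i} := by
  rw [← Fintype.card_subtype_or_disjoint]
  · exact Fintype.card_congr (Equiv.subtypeEquivRight fun i => by rw [le_iff_eq_or_lt, eq_comm])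
  · exact disjoint_iff_inf_le.mpr fun i ⟨h0, hpos⟩ => hpos.ne' h0

theorem Matrix.dotProduct_mulVec_eq_zero_of_mem_range {n R : Type*} [Fintype n] [CommRing R]
    {S A : Matrix n n R} (hS : S.IsSymm) (h : S * A * S = 0) {x : n → R}
    (hx : x ∈ LinearMap.range S.mulVecLin) : x ⬝ᵥ A *ᵥ x = 0 := by
  obtain ⟨u, rfl⟩ := hx
  rw [mulVecLin_apply]
  nth_rewrite 1 [← hS.eq, ← vecMul_transpose, transpose_transpose]
  rw [← dotProduct_mulVec, mulVec_mulVec, mulVec_mulVec, h, zero_mulVec, dotProduct_zero]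

namespace Matrix.IsHermitian

variable {n : Type*} [Fintype n] [DecidableEq n] {A : Matrix n n ℝ}

theorem dotProduct_mulVec_eq_sum_eigenvalues (hA : A.IsHermitian) (x : n → ℝ) :
    x ⬝ᵥ A *ᵥ x =
      ∑ i, hA.eigenvalues i * (star (hA.eigenvectorUnitary : Matrix n n ℝ) *ᵥ x) i ^ 2 := by
  set U : Matrix n n ℝ := (hA.eigenvectorUnitary : Matrix n n ℝ)
  have hA' : A = U * diagonal hA.eigenvalues * star U := by
    simpa [Unitary.conjStarAlgAut_apply] using hA.spectral_theorem
  calc x ⬝ᵥ A *ᵥ x = (star U *ᵥ x) ⬝ᵥ diagonal hA.eigenvalues *ᵥ (star U *ᵥ x) := by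
        conv_lhs => rw [hA']
        rw [← mulVec_mulVec, ← mulVec_mulVec, dotProduct_mulVec, ← mulVec_transpose]
        simp [star_eq_conjTranspose]
    _ = _ := by simp only [dotProduct, mulVec_diagonal]; congr! 1; ring

theorem finrank_le_card_of_isotropic (hA : A.IsHermitian) (W : Submodule ℝ (n → ℝ))
    (hW : ∀ x ∈ W, x ⬝ᵥ A *ᵥ x = 0) :
    Module.finrank ℝ W ≤ Fintype.card {i // hA.eigenvalues i = 0} +
      min (Fintype.card {i // 0 < hA.eigenvalues i})
        (Fintype.card {i // hA.eigenvalues i < 0}) := by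
  let e := UnitaryGroup.toLinearEquiv (star hA.eigenvectorUnitary)
  let W' := W.map (e : (n → ℝ) →ₗ[ℝ] n → ℝ)
  have hform : ∀ y ∈ W', ∑ i, hA.eigenvalues i * y i ^ 2 = 0 := by
    rintro _ ⟨x, hx, rfl⟩
    rw [← hW x hx, hA.dotProduct_mulVec_eq_sum_eigenvalues]
    rfl
  have hrank : Module.finrank ℝ W' = Module.finrank ℝ W := LinearEquiv.finrank_map_eq e W
  have hpos := finrank_le_card_nonneg_of_sum_mul_sq_nonneg _ W' fun y hy => (hform y hy).ge
  have hneg := finrank_le_card_nonneg_of_sum_mul_sq_nonneg (-hA.eigenvalues) W' fun y hy => by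
    simp [hform y hy]
  rw [Fintype.card_nonneg_eq_card_zero_add_card_pos] at hpos hneg
  simp only [Pi.neg_apply, neg_eq_zero, neg_pos] at hneg
  omega

theorem finrank_ker_eq_card_eigenvalues_eq_zero (hA : A.IsHermitian) :
    Module.finrank ℝ (LinearMap.ker A.mulVecLin) = Fintype.card {i // hA.eigenvalues i = 0} := by
  have hrank_nullity := LinearMap.finrank_range_add_finrank_ker A.mulVecLin
  have hrank : A.rank = Fintype.card n - Fintype.card {i // hA.eigenvalues i = 0} := by
    rw [hA.rank_eq_card_non_zero_eigs, Fintype.card_subtype_compl]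
  have := Fintype.card_subtype_le (fun i => hA.eigenvalues i = 0)
  rw [Module.finrank_pi] at hrank_nullity
  change A.rank + _ = _ at hrank_nullity
  omega

end Matrix.IsHermitian

/-- If `A` is real symmetric and `Σ` is real symmetric with `ΣAΣ = 0`, then
`rank Σ ≤ dim ker A + min(p, q)`, where `p` and `q` are the numbers of positive and
negative eigenvalues of `A` respectively (counted with multiplicity). -/
theorem stmt_9 (d : ℕ) (A S : Matrix (Fin d) (Fin d) ℝ)
    (hA : A.IsHermitian) (hS : S.IsHermitian) (h : S * A * S = 0) :
    S.rank ≤ Module.finrank ℝ (LinearMap.ker A.mulVecLin) +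
      min (Nat.card {i : Fin d // 0 < hA.eigenvalues i})
        (Nat.card {i : Fin d // hA.eigenvalues i < 0}) := by
  rw [Matrix.rank, hA.finrank_ker_eq_card_eigenvalues_eq_zero, Nat.card_eq_fintype_card,
    Nat.card_eq_fintype_card]
  exact hA.finrank_le_card_of_isotropic _ fun _ =>
    dotProduct_mulVec_eq_zero_of_mem_range (isHermitian_iff_isSymm.mp hS) h
end

section
/- Let A = diag(λ₁,…,λ_d) with λ₁ = … = λ_k = 0, λ_{k+1} = … = λ_{k+ℓ} = 1, and λ_{k+ℓ+1} = … = λ_d = −1. If Σ is symmetric with ΣAΣ = 0, then rank(Σ) ≤ k + min(ℓ, d − k − ℓ). -/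
open Matrix

lemma aux_rank_add {n : ℕ} (A B : Matrix (Fin n) (Fin n) ℝ) :
    (A + B).rank ≤ A.rank + B.rank := by
  rw [Matrix.rank, Matrix.rank, Matrix.rank, mulVecLin_add]
  have hle : LinearMap.range (A.mulVecLin + B.mulVecLin) ≤
      LinearMap.range A.mulVecLin ⊔ LinearMap.range B.mulVecLin := by
    rintro x ⟨v, rfl⟩
    exact Submodule.mem_sup.2 ⟨A.mulVecLin v, ⟨v, rfl⟩, B.mulVecLin v, ⟨v, rfl⟩, rfl⟩
  exact (Submodule.finrank_mono hle).trans
    (Submodule.finrank_add_le_finrank_add_finrank _ _)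

lemma aux_card_Ico (d a b : ℕ) (hab : a ≤ b) (hb : b ≤ d) :
    Fintype.card {i : Fin d // a ≤ (i : ℕ) ∧ (i : ℕ) < b} = b - a := by
  simp only [Fintype.card_subtype]
  have : Finset.filter (fun x : Fin d => a ≤ (x : ℕ) ∧ (x : ℕ) < b) Finset.univ
      = Finset.map ⟨fun j : Fin (b - a) => (⟨a + j, by omega⟩ : Fin d),
          by intro x y hxy; simpa [Fin.ext_iff] using hxy⟩ Finset.univ := by
    ext x
    simp only [Finset.mem_filter, Finset.mem_univ, true_and, Finset.mem_map,
      Function.Embedding.coeFn_mk]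
    constructor
    · rintro ⟨h1, h2⟩
      exact ⟨⟨(x : ℕ) - a, by omega⟩, Fin.ext (by show a + ((x : ℕ) - a) = x; omega)⟩
    · rintro ⟨y, rfl⟩
      have := y.2; change a ≤ a + (y : ℕ) ∧ a + (y : ℕ) < b; constructor <;> omega
  rw [this]; simp

lemma aux_rank_smul {n : ℕ} (c : ℝ) (M : Matrix (Fin n) (Fin n) ℝ) :
    (c • M).rank ≤ M.rank := by
  have : c • M = (c • (1 : Matrix (Fin n) (Fin n) ℝ)) * M := by
    rw [smul_mul_assoc, one_mul]
  rw [this]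
  exact rank_mul_le_right _ _

/-- Let `A = diag(λ₁,…,λ_d)` with `λᵢ = 0` for `i < k`, `λᵢ = 1` for `k ≤ i < k + ℓ`, and
`λᵢ = −1` otherwise. If `Σ` is symmetric with `ΣAΣ = 0`, then
`rank(Σ²) ≤ k + min(ℓ, d − k − ℓ)` and hence `rank Σ ≤ k + min(ℓ, d − k − ℓ)`. -/
theorem stmt_10 (d k ℓ : ℕ) (hkl : k + ℓ ≤ d)
    (A : Matrix (Fin d) (Fin d) ℝ)
    (hA : A = Matrix.diagonal (fun i : Fin d =>
      if (i : ℕ) < k then (0 : ℝ) else if (i : ℕ) < k + ℓ then 1 else -1))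
    (S : Matrix (Fin d) (Fin d) ℝ) (hS : S.IsHermitian) (h : S * A * S = 0) :
    (S * S).rank ≤ k + min ℓ (d - k - ℓ) ∧ S.rank ≤ k + min ℓ (d - k - ℓ) := by
  classical
  set R : Matrix (Fin d) (Fin d) ℝ :=
    Matrix.diagonal (fun i : Fin d => if (i : ℕ) < k then (1 : ℝ) else 0) with hR
  set P : Matrix (Fin d) (Fin d) ℝ :=
    Matrix.diagonal (fun i : Fin d =>
      if (i : ℕ) < k then (0 : ℝ) else if (i : ℕ) < k + ℓ then 1 else 0) with hP
  set Q : Matrix (Fin d) (Fin d) ℝ :=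
    Matrix.diagonal (fun i : Fin d => if (i : ℕ) < k + ℓ then (0 : ℝ) else 1) with hQ
  have hAPQ : A = P - Q := by
    rw [hA, hP, hQ, Matrix.diagonal_sub]
    exact congrArg Matrix.diagonal (funext fun i => by split_ifs <;> norm_num <;> omega)
  have hI : R + P + Q = 1 := by
    rw [hR, hP, hQ, ← Matrix.diagonal_one, Matrix.diagonal_add, Matrix.diagonal_add]
    exact congrArg Matrix.diagonal (funext fun i => by split_ifs <;> norm_num <;> omega)
  have hPQ : S * P * S = S * Q * S := by
    have : S * P * S - S * Q * S = 0 := by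
      have := h
      rw [hAPQ] at this
      calc S * P * S - S * Q * S = S * (P - Q) * S := by noncomm_ring
        _ = 0 := this
    exact sub_eq_zero.mp this
  -- rank of diagonal pieces
  have hrankR : R.rank = k := by
    rw [hR, Matrix.rank_diagonal]
    have he : ∀ i : Fin d, ((if (i : ℕ) < k then (1 : ℝ) else 0) ≠ 0) ↔
        (0 ≤ (i : ℕ) ∧ (i : ℕ) < k) := by
      intro i; split_ifs with hi <;> simp [hi]
    rw [Fintype.card_congr (Equiv.subtypeEquivRight he)]
    simpa using aux_card_Ico d 0 k (Nat.zero_le _) (by omega)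
  have hrankP : P.rank = ℓ := by
    rw [hP, Matrix.rank_diagonal]
    have he : ∀ i : Fin d,
        ((if (i : ℕ) < k then (0 : ℝ) else if (i : ℕ) < k + ℓ then 1 else 0) ≠ 0) ↔
        (k ≤ (i : ℕ) ∧ (i : ℕ) < k + ℓ) := by
      intro i; split_ifs with h1 h2 <;> simp <;> omega
    rw [Fintype.card_congr (Equiv.subtypeEquivRight he)]
    have := aux_card_Ico d k (k + ℓ) (by omega) hkl
    omega
  have hrankQ : Q.rank = d - k - ℓ := by
    rw [hQ, Matrix.rank_diagonal]
    have he : ∀ i : Fin d, ((if (i : ℕ) < k + ℓ then (0 : ℝ) else 1) ≠ 0) ↔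
        (k + ℓ ≤ (i : ℕ) ∧ (i : ℕ) < d) := by
      intro i; split_ifs with h1 <;> simp <;> omega
    rw [Fintype.card_congr (Equiv.subtypeEquivRight he)]
    have := aux_card_Ico d (k + ℓ) d hkl le_rfl
    omega
  have hrP : (S * P * S).rank ≤ ℓ := by
    calc (S * P * S).rank ≤ (S * P).rank := rank_mul_le_left _ _
      _ ≤ P.rank := rank_mul_le_right _ _
      _ = ℓ := hrankP
  have hrQ : (S * P * S).rank ≤ d - k - ℓ := by
    rw [hPQ]
    calc (S * Q * S).rank ≤ (S * Q).rank := rank_mul_le_left _ _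
      _ ≤ Q.rank := rank_mul_le_right _ _
      _ = d - k - ℓ := hrankQ
  have hrR : (S * R * S).rank ≤ k := by
    calc (S * R * S).rank ≤ (S * R).rank := rank_mul_le_left _ _
      _ ≤ R.rank := rank_mul_le_right _ _
      _ = k := hrankR
  have hSS : S * S = S * R * S + (2 : ℝ) • (S * P * S) := by
    calc S * S = S * (R + P + Q) * S := by rw [hI, Matrix.mul_one]
      _ = S * R * S + S * P * S + S * Q * S := by noncomm_ring
      _ = S * R * S + S * P * S + S * P * S := by rw [hPQ]
      _ = S * R * S + (2 : ℝ) • (S * P * S) := by rw [two_smul, add_assoc]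
  have hmain : (S * S).rank ≤ k + min ℓ (d - k - ℓ) := by
    rw [hSS]
    calc (S * R * S + (2 : ℝ) • (S * P * S)).rank
        ≤ (S * R * S).rank + ((2 : ℝ) • (S * P * S)).rank := aux_rank_add _ _
      _ ≤ k + (S * P * S).rank := add_le_add hrR (aux_rank_smul _ _)
      _ ≤ k + min ℓ (d - k - ℓ) := Nat.add_le_add_left (le_min hrP hrQ) _
  refine ⟨hmain, ?_⟩
  have hconj : (Sᴴ * S).rank = S.rank := Matrix.rank_conjTranspose_mul_self S
  rw [hS] at hconj
  rw [← hconj]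
  exact hmain
end

section
/- Let q, k, v ∈ ℝ, a = qk, and s₀ > 0. Consider the ODE ṡ = 4avs²/(1 + 2k²s) with s(0) = s₀. If av > 0 then s(t) → +∞ as t → +∞; if av < 0 then s(t) → 0 as t → +∞. -/
/-!
Along a positive solution the sign of `ṡ` is that of `av`, so `s` is monotone. If it stayed
in a compact interval `[s₀, b]` (resp. `[ε, s₀]`) of `(0, ∞)`, the continuous vector field would be
bounded away from `0` there, forcing `s` to grow (resp. decay) at least linearly: this contradicts
the bound `s ≤ b` (resp. the positivity of `s`). Hence `s → ∞` (resp. `s → 0`).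
-/

open Filter Set

theorem mul_sub_le_sub_of_le_hasDerivAt {f f' : ℝ → ℝ} {C : ℝ}
    (hf : ∀ t, 0 ≤ t → HasDerivAt f (f' t) t) (hC : ∀ t, 0 ≤ t → C ≤ f' t)
    {x y : ℝ} (hx : 0 ≤ x) (hxy : x ≤ y) : C * (y - x) ≤ f y - f x := by
  refine (convex_Ici 0).mul_sub_le_image_sub_of_le_deriv
    (fun t ht => (hf t ht).continuousAt.continuousWithinAt)
    (fun t ht => (hf t (interior_subset ht)).differentiableAt.differentiableWithinAt)
    (fun t ht => ?_) x hx y (hx.trans hxy) hxy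
  rw [(hf t (interior_subset ht)).deriv]
  exact hC t (interior_subset ht)

theorem sub_le_mul_sub_of_hasDerivAt_le {f f' : ℝ → ℝ} {C : ℝ}
    (hf : ∀ t, 0 ≤ t → HasDerivAt f (f' t) t) (hC : ∀ t, 0 ≤ t → f' t ≤ C)
    {x y : ℝ} (hx : 0 ≤ x) (hxy : x ≤ y) : f y - f x ≤ C * (y - x) := by
  have := mul_sub_le_sub_of_le_hasDerivAt (fun t ht => (hf t ht).neg)
    (fun t ht => neg_le_neg (hC t ht)) hx hxy
  simp only [Pi.neg_apply] at this
  linarith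

section AutonomousODE

variable {f g : ℝ → ℝ}

theorem tendsto_atTop_of_hasDerivAt_comp_of_pos (hg : ContinuousOn g (Ioi 0))
    (hg_pos : ∀ x, 0 < x → 0 < g x) (hf_pos : ∀ t, 0 ≤ t → 0 < f t)
    (hf : ∀ t, 0 ≤ t → HasDerivAt f (g (f t)) t) : Tendsto f atTop atTop := by
  have hmono : ∀ x y, 0 ≤ x → x ≤ y → f x ≤ f y := fun x y hx hxy => by
    have := mul_sub_le_sub_of_le_hasDerivAt hf (fun t ht => (hg_pos _ (hf_pos t ht)).le) hx hxy
    linarith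
  suffices hunb : ∀ b, ∃ t₀, 0 ≤ t₀ ∧ b ≤ f t₀ by
    refine tendsto_atTop.2 fun b => ?_
    obtain ⟨t₀, ht₀, hb⟩ := hunb b
    filter_upwards [eventually_ge_atTop t₀] with t ht
    exact hb.trans (hmono t₀ t ht₀ ht)
  by_contra! ⟨b, hb⟩
  have hf₀ : 0 < f 0 := hf_pos 0 le_rfl
  have hrange : ∀ t, 0 ≤ t → f t ∈ Icc (f 0) b := fun t ht =>
    ⟨hmono 0 t le_rfl ht, (hb t ht).le⟩
  obtain ⟨x₀, hx₀, hmin⟩ := isCompact_Icc.exists_isMinOn (nonempty_Icc.2 (hb 0 le_rfl).le)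
    (hg.mono fun x hx => hf₀.trans_le hx.1)
  have hc : 0 < g x₀ := hg_pos _ (hf₀.trans_le hx₀.1)
  have hT : 0 ≤ b / g x₀ := div_nonneg (hf₀.trans (hb 0 le_rfl)).le hc.le
  have hgrowth := mul_sub_le_sub_of_le_hasDerivAt hf (fun t ht => hmin (hrange t ht)) le_rfl hT
  rw [sub_zero, mul_div_cancel₀ _ hc.ne'] at hgrowth
  linarith [hb _ hT]

theorem tendsto_zero_of_hasDerivAt_comp_of_neg (hg : ContinuousOn g (Ioi 0))
    (hg_neg : ∀ x, 0 < x → g x < 0) (hf_pos : ∀ t, 0 ≤ t → 0 < f t)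
    (hf : ∀ t, 0 ≤ t → HasDerivAt f (g (f t)) t) : Tendsto f atTop (nhds 0) := by
  have hanti : ∀ x y, 0 ≤ x → x ≤ y → f y ≤ f x := fun x y hx hxy => by
    have := sub_le_mul_sub_of_hasDerivAt_le hf (fun t ht => (hg_neg _ (hf_pos t ht)).le) hx hxy
    linarith
  suffices hsmall : ∀ ε, 0 < ε → ∃ t₀, 0 ≤ t₀ ∧ f t₀ < ε by
    refine tendsto_order.2 ⟨fun b hb => ?_, fun ε hε => ?_⟩
    · filter_upwards [eventually_ge_atTop 0] with t ht
      exact hb.trans (hf_pos t ht)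
    · obtain ⟨t₀, ht₀, hε'⟩ := hsmall ε hε
      filter_upwards [eventually_ge_atTop t₀] with t ht
      exact (hanti t₀ t ht₀ ht).trans_lt hε'
  by_contra! ⟨ε, hε, hf_ge⟩
  have hrange : ∀ t, 0 ≤ t → f t ∈ Icc ε (f 0) := fun t ht =>
    ⟨hf_ge t ht, hanti 0 t le_rfl ht⟩
  obtain ⟨x₀, hx₀, hmax⟩ := isCompact_Icc.exists_isMaxOn (nonempty_Icc.2 (hf_ge 0 le_rfl))
    (hg.mono fun x hx => hε.trans_le hx.1)
  have hc : g x₀ < 0 := hg_neg _ (hε.trans_le hx₀.1)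
  have hT : 0 ≤ f 0 / -g x₀ := div_nonneg (hf_pos 0 le_rfl).le (neg_nonneg.2 hc.le)
  have hdecay := sub_le_mul_sub_of_hasDerivAt_le hf (fun t ht => hmax (hrange t ht)) le_rfl hT
  rw [sub_zero, show g x₀ * (f 0 / -g x₀) = -f 0 by field_simp [hc.ne]] at hdecay
  linarith [hf_pos _ hT]

end AutonomousODE

noncomputable def covarianceRate (a v k x : ℝ) : ℝ := 4 * a * v * x ^ 2 / (1 + 2 * k ^ 2 * x)

section CovarianceRate

variable {a v : ℝ} (k : ℝ) {x : ℝ}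

theorem continuousOn_covarianceRate : ContinuousOn (covarianceRate a v k) (Ioi 0) :=
  ContinuousOn.div (by fun_prop) (by fun_prop) fun y (hy : 0 < y) => by positivity

theorem covarianceRate_pos (hav : 0 < a * v) (hx : 0 < x) : 0 < covarianceRate a v k x :=
  div_pos (by nlinarith [pow_pos hx 2]) (by positivity)

theorem covarianceRate_neg (hav : a * v < 0) (hx : 0 < x) : covarianceRate a v k x < 0 :=
  div_neg_of_neg_of_pos (by nlinarith [pow_pos hx 2]) (by positivity)

end CovarianceRate

theorem stmt_13_general (k v a : ℝ)
    (s : ℝ → ℝ) (hpos : ∀ t : ℝ, 0 ≤ t → 0 < s t)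
    (hode : ∀ t : ℝ, 0 ≤ t →
      HasDerivAt s (4 * a * v * (s t) ^ 2 / (1 + 2 * k ^ 2 * s t)) t) :
    (0 < a * v → Tendsto s atTop atTop) ∧
    (a * v < 0 → Tendsto s atTop (nhds 0)) :=
  ⟨fun hav => tendsto_atTop_of_hasDerivAt_comp_of_pos (continuousOn_covarianceRate k)
      (fun _ => covarianceRate_pos k hav) hpos hode,
    fun hav => tendsto_zero_of_hasDerivAt_comp_of_neg (continuousOn_covarianceRate k)
      (fun _ => covarianceRate_neg k hav) hpos hode⟩

/-- For `a = qk` and `s₀ > 0`, any positive global solution of `ṡ = 4avs²/(1 + 2k²s)` with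
`s(0) = s₀` tends to `+∞` if `av > 0` and to `0` if `av < 0`, as `t → +∞`. -/
theorem stmt_13 (q k v a s₀ : ℝ) (ha : a = q * k) (hs₀ : 0 < s₀)
    (s : ℝ → ℝ) (h0 : s 0 = s₀) (hpos : ∀ t : ℝ, 0 ≤ t → 0 < s t)
    (hode : ∀ t : ℝ, 0 ≤ t →
      HasDerivAt s (4 * a * v * (s t) ^ 2 / (1 + 2 * k ^ 2 * s t)) t) :
    (0 < a * v → Tendsto s atTop atTop) ∧
    (a * v < 0 → Tendsto s atTop (nhds 0)) :=
  stmt_13_general k v a s hpos hode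
end

section
/- Let a, v ∈ ℝ with a ≠ 0 and s₀ > 0. The ODE ṡ = (v/a)(√(4a²s² + 1) − 1) with s(0) = s₀ has a global solution on [0,∞), and: if av > 0 then s(t) → +∞ as t → +∞; if av < 0 then s(t) → 0 as t → +∞. -/
/-!
Separation of variables. With `u = 2|a| s` the equation reads `u' = c (√(u² + 1) - 1)` with
`c = 2|a| v / a`, which has the sign of `av`. In the variable `x = log u` it separates as
`Φ'(x) x' = c` for a potential `Φ` whose derivative is positive and which maps `ℝ` onto `ℝ`, so
`x t = Φ⁻¹(c t + Φ(x 0))` is a global solution, tending to `±∞` with the sign of `c`.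
-/

open Filter Real

theorem exists_forall_hasDerivAt_const_div {f f' : ℝ → ℝ}
    (hf : ∀ x, HasDerivAt f (f' x) x) (hf' : ∀ x, 0 < f' x)
    (htop : Tendsto f atTop atTop) (hbot : Tendsto f atBot atBot) (c x₀ : ℝ) :
    ∃ x : ℝ → ℝ, x 0 = x₀ ∧ (∀ t, HasDerivAt x (c / f' (x t)) t) ∧
      (0 < c → Tendsto x atTop atTop) ∧ (c < 0 → Tendsto x atTop atBot) := by
  have hcont : Continuous f := continuous_iff_continuousAt.2 fun x => (hf x).continuousAt
  let e := StrictMono.orderIsoOfSurjective f (strictMono_of_hasDerivAt_pos hf hf')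
    (hcont.surjective htop hbot)
  have hinv : ∀ y, HasDerivAt e.symm (f' (e.symm y))⁻¹ y := fun y =>
    (hf _).of_local_left_inverse e.symm.continuous.continuousAt (hf' _).ne'
      (.of_forall e.apply_symm_apply)
  refine ⟨fun t => e.symm (c * t + f x₀), ?_, fun t => ?_, fun hc => ?_, fun hc => ?_⟩
  · show e.symm (c * 0 + f x₀) = x₀
    rw [mul_zero, zero_add]
    exact e.symm_apply_apply x₀
  · rw [div_eq_inv_mul]
    exact (hinv _).comp t (by simpa using ((hasDerivAt_id t).const_mul c).add_const (f x₀))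
  · exact e.symm.tendsto_atTop.comp
      (tendsto_atTop_add_const_right _ _ (tendsto_id.const_mul_atTop hc))
  · exact e.symm.tendsto_atBot.comp
      (tendsto_atBot_add_const_right _ _ (tendsto_id.const_mul_atTop_of_neg hc))

/-- In the variable `x = log u`, an antiderivative of `u ↦ 1 / (√(u² + 1) - 1)`; by `exp_arsinh`
the second term is `(√(u² + 1) + 1) / u`. -/
noncomputable def separationPotential (x : ℝ) : ℝ :=
  arsinh (exp x) - exp (arsinh (exp (-x)))

theorem hasDerivAt_separationPotential (x : ℝ) :
    HasDerivAt separationPotential ((√(exp x ^ 2 + 1) + 1) * exp (-x)) x := by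
  refine ((hasDerivAt_exp x).arsinh.sub (hasDerivAt_neg x).exp.arsinh.exp).congr_deriv ?_
  have hp := exp_pos x
  have hS : √(exp x ^ 2 + 1) ^ 2 = exp x ^ 2 + 1 := sq_sqrt (by positivity)
  have hS' : √(1 + exp (-x) ^ 2) = √(exp x ^ 2 + 1) / exp x := by
    rw [exp_neg, ← sqrt_sq hp.le, ← sqrt_div' _ (sq_nonneg _), sqrt_sq hp.le]
    congr 1; field_simp
  have hpos : 0 < √(exp x ^ 2 + 1) := sqrt_pos.2 (by positivity)
  rw [exp_arsinh, hS', add_comm 1 (exp x ^ 2), exp_neg, smul_eq_mul, smul_eq_mul]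
  field_simp
  linear_combination -hS

theorem tendsto_arsinh_atTop : Tendsto arsinh atTop atTop := sinhOrderIso.symm.tendsto_atTop

theorem tendsto_separationPotential_atTop : Tendsto separationPotential atTop atTop := by
  have h := (tendsto_arsinh_atTop.comp tendsto_exp_atTop).atTop_add
    tendsto_exp_neg_atTop_nhds_zero.arsinh.rexp.neg
  exact h.congr fun x => by simp only [Function.comp_apply, separationPotential, sub_eq_add_neg]

theorem tendsto_separationPotential_atBot : Tendsto separationPotential atBot atBot := by
  have h := tendsto_exp_atBot.arsinh.add_atBot (tendsto_neg_atTop_atBot.comp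
    (tendsto_exp_atTop.comp (tendsto_arsinh_atTop.comp
      (tendsto_exp_atTop.comp tendsto_neg_atBot_atTop))))
  exact h.congr fun x => by simp only [Function.comp_apply, separationPotential, sub_eq_add_neg]

theorem sq_div_sqrt_sq_add_one_add_one (u : ℝ) :
    u ^ 2 / (√(u ^ 2 + 1) + 1) = √(u ^ 2 + 1) - 1 := by
  have hS : √(u ^ 2 + 1) ^ 2 = u ^ 2 + 1 := sq_sqrt (by positivity)
  have hden : 0 < √(u ^ 2 + 1) + 1 := by positivity
  field_simp
  linear_combination -hS

/-- For `a ≠ 0` and `s₀ > 0`, the ODE `ṡ = (v/a)(√(4a²s² + 1) − 1)`, `s(0) = s₀`, has a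
global positive solution on `[0,∞)`; it tends to `+∞` if `av > 0` and to `0` if `av < 0`,
as `t → +∞`. -/
theorem stmt_14 (a v s₀ : ℝ) (ha : a ≠ 0) (hs₀ : 0 < s₀) :
    ∃ s : ℝ → ℝ, s 0 = s₀ ∧ (∀ t : ℝ, 0 ≤ t → 0 < s t) ∧
      (∀ t : ℝ, 0 ≤ t →
        HasDerivAt s (v / a * (Real.sqrt (4 * a ^ 2 * (s t) ^ 2 + 1) - 1)) t) ∧
      (0 < a * v → Tendsto s atTop atTop) ∧
      (a * v < 0 → Tendsto s atTop (nhds 0)) := by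
  set b := 2 * |a|
  have hb : 0 < b := by positivity
  have hb2 : b ^ 2 = 4 * a ^ 2 := by rw [mul_pow, sq_abs]; ring
  have hva : v / a = a * v / a ^ 2 := by field_simp
  obtain ⟨x, hx0, hx, htop, hbot⟩ := exists_forall_hasDerivAt_const_div
    hasDerivAt_separationPotential (fun _ => by positivity) tendsto_separationPotential_atTop
    tendsto_separationPotential_atBot (b * (v / a)) (log (b * s₀))
  refine ⟨fun t => exp (x t) / b, ?_, fun t _ => by positivity, fun t _ => ?_, fun hav => ?_,
    fun hav => ?_⟩
  · simp only [hx0, exp_log (mul_pos hb hs₀)]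
    field_simp
  · refine ((hx t).exp.div_const b).congr_deriv ?_
    have h4 : 4 * a ^ 2 * (exp (x t) / b) ^ 2 = exp (x t) ^ 2 := by
      rw [← hb2]; field_simp
    rw [h4, ← sq_div_sqrt_sq_add_one_add_one, exp_neg]
    have hden : 0 < √(exp (x t) ^ 2 + 1) + 1 := by positivity
    field_simp
  · have hc : 0 < b * (v / a) := mul_pos hb (by rw [hva]; positivity)
    exact (tendsto_exp_atTop.comp (htop hc)).atTop_div_const hb
  · have hc : b * (v / a) < 0 :=
      mul_neg_of_pos_of_neg hb (by rw [hva]; exact div_neg_of_neg_of_pos hav (by positivity))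
    simpa using (tendsto_exp_atBot.comp (hbot hc)).div_const b
end

section
/- Let Σ ≻ 0 and Ω ≻ 0 be d×d positive definite matrices, A invertible, ε > 0, and suppose F, G ≻ 0 satisfy F = εΣ⁻¹ + AᵀG⁻¹A and G = εΩ⁻¹ + AF⁻¹Aᵀ. Define C_F := ΩAF⁻¹Aᵀ. Then C_F satisfies the quadratic matrix equation C_F² + εC_F = ΩAΣAᵀ, all eigenvalues of C_F are positive, and C_F = Ω^{1/2}(Ω^{1/2}AΣAᵀΩ^{1/2} + (ε²/4)I)^{1/2}Ω^{−1/2} − (ε/2)I. -/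
/-!
Write `Σ = S`, `Ω = W`, `X = AF⁻¹Aᵀ` and `M = AΣAᵀ`. Conjugating the first equation by `A`
gives `X⁻¹ = εM⁻¹ + G⁻¹`, and the second one says `G - X = εΩ⁻¹`; together they give
`M = GΩX = εX + XΩX`, which is the quadratic equation for `C_F = ΩX` after multiplying by `Ω`.
With `R = Ω^{1/2}`, `C_F = R(RXR)R⁻¹` is similar to the positive definite matrix `RXR`, and
`(RXR + (ε/2)I)² = RMR + (ε²/4)I`, so `RXR + (ε/2)I` is the positive semidefinite square root
of the right-hand side.
-/

open Matrix

section

open scoped ComplexOrder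

/-- The square root of a positive semidefinite matrix, as defined in Mathlib (December 2024)
under the name `Matrix.PosSemidef.sqrt`, which has since been removed. -/
noncomputable def Matrix.PosSemidef.sqrt {n : Type*} [Fintype n] [DecidableEq n] {𝕜 : Type*}
    [RCLike 𝕜] {A : Matrix n n 𝕜} (hA : A.PosSemidef) : Matrix n n 𝕜 :=
  (hA.1.eigenvectorUnitary : Matrix n n 𝕜) * diagonal ((↑) ∘ (√·) ∘ hA.1.eigenvalues) *
    (star hA.1.eigenvectorUnitary : Matrix n n 𝕜)

end

open scoped ComplexOrder MatrixOrder

namespace Matrix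

variable {n 𝕜 : Type*} [Fintype n] [DecidableEq n] [RCLike 𝕜]

namespace PosSemidef

lemma sqrt_eq_cfcSqrt {A : Matrix n n 𝕜} (hA : A.PosSemidef) : hA.sqrt = CFC.sqrt A := by
  rw [CFC.sqrt_eq_cfc, cfc_nnreal_eq_real _ A hA.nonneg, hA.1.cfc_eq]
  simp [PosSemidef.sqrt, IsHermitian.cfc, Function.comp_def, hA.eigenvalues_nonneg]

lemma eq_of_mul_self_eq {A B : Matrix n n 𝕜} (hA : A.PosSemidef) (hB : B.PosSemidef)
    (h : A * A = B * B) : A = B := by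
  rw [← CFC.sqrt_sq A hA.nonneg, sq, h, ← sq, CFC.sqrt_sq B hB.nonneg]

end PosSemidef

lemma PosDef.isUnit_det {A : Matrix n n 𝕜} (hA : A.PosDef) : IsUnit A.det :=
  (isUnit_iff_isUnit_det A).mp hA.isUnit

lemma PosDef.isUnit_cfcSqrt {W : Matrix n n 𝕜} (hW : W.PosDef) : IsUnit (CFC.sqrt W) :=
  isUnit_of_mul_isUnit_left ((CFC.sqrt_mul_sqrt_self W hW.posSemidef.nonneg).symm ▸ hW.isUnit)

lemma PosSemidef.cfcSqrt_mul_mul_cfcSqrt {W X : Matrix n n 𝕜} (hX : X.PosSemidef) :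
    (CFC.sqrt W * X * CFC.sqrt W).PosSemidef := by
  simpa [(CFC.sqrt_nonneg W).posSemidef.isHermitian.eq] using
    hX.mul_mul_conjTranspose_same (CFC.sqrt W)

lemma PosDef.cfcSqrt_mul_mul_cfcSqrt {W X : Matrix n n 𝕜} (hW : W.PosDef) (hX : X.PosDef) :
    (CFC.sqrt W * X * CFC.sqrt W).PosDef := by
  simpa [(CFC.sqrt_nonneg W).posSemidef.isHermitian.eq] using
    hX.mul_mul_conjTranspose_same (vecMul_injective_iff_isUnit.mpr hW.isUnit_cfcSqrt)

lemma PosDef.pos_of_mem_spectrum_mul {W X : Matrix n n 𝕜} (hW : W.PosDef) (hX : X.PosDef)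
    {c : ℝ} (hc : c ∈ spectrum ℝ (W * X)) : 0 < c := by
  set u := hW.isUnit_cfcSqrt.unit
  have hconj : W * X = u * (CFC.sqrt W * X * CFC.sqrt W) * (↑u⁻¹ : Matrix n n 𝕜) := by
    calc W * X = (CFC.sqrt W * CFC.sqrt W) * X * (↑u * ↑u⁻¹) := by
          rw [u.mul_inv, CFC.sqrt_mul_sqrt_self W hW.posSemidef.nonneg, mul_one]
      _ = u * (CFC.sqrt W * X * CFC.sqrt W) * (↑u⁻¹ : Matrix n n 𝕜) := by
          simp only [u, IsUnit.unit_spec, mul_assoc]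
  have hpos := hW.cfcSqrt_mul_mul_cfcSqrt hX
  rw [hconj, spectrum.units_conjugate, hpos.isHermitian.spectrum_real_eq_range_eigenvalues] at hc
  obtain ⟨i, rfl⟩ := hc
  exact hpos.eigenvalues_pos i

theorem PosDef.mul_eq_cfcSqrt_mul_mul_inv_sub {W X Y : Matrix n n 𝕜} (hW : W.PosDef)
    (hX : X.PosSemidef) (hY : Y.PosSemidef) {ε : ℝ} (hε : 0 ≤ ε)
    (hY2 : Y * Y = CFC.sqrt W * (ε • X + X * W * X) * CFC.sqrt W + (ε ^ 2 / 4) • 1) :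
    W * X = CFC.sqrt W * Y * (CFC.sqrt W)⁻¹ - (ε / 2) • 1 := by
  set R := CFC.sqrt W
  have hRR : R * R = W := CFC.sqrt_mul_sqrt_self W hW.posSemidef.nonneg
  have hRR' : R * R⁻¹ = 1 := R.mul_nonsing_inv ((isUnit_iff_isUnit_det R).mp hW.isUnit_cfcSqrt)
  have hY' : R * X * R + (ε / 2) • 1 = Y := by
    refine PosSemidef.eq_of_mul_self_eq
      (hX.cfcSqrt_mul_mul_cfcSqrt.add (PosSemidef.one.smul (by positivity))) hY ?_
    rw [hY2]
    simp only [add_mul, mul_add, Matrix.smul_mul, Matrix.mul_smul, mul_assoc, ← mul_assoc R R,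
      hRR, mul_one, one_mul, smul_smul]
    module
  rw [← hY']
  simp only [add_mul, mul_add, mul_assoc, hRR', mul_one, Matrix.smul_mul, Matrix.mul_smul]
  rw [← mul_assoc R R, hRR, add_sub_cancel_right]

section SchrodingerSystem

variable {K : Type*} [Field K] {S W A F G : Matrix n n K} {ε : K}

lemma inv_mul_inv_mul_transpose_eq (hA : IsUnit A.det) (hF : IsUnit F.det)
    (hFeq : F = ε • S⁻¹ + Aᵀ * G⁻¹ * A) :
    (A * F⁻¹ * Aᵀ)⁻¹ = ε • (A * S * Aᵀ)⁻¹ + G⁻¹ := by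
  have hAt : IsUnit Aᵀ.det := by rwa [det_transpose]
  simp only [mul_inv_rev, nonsing_inv_nonsing_inv F hF]
  rw [hFeq]
  simp only [add_mul, mul_add, Matrix.smul_mul, Matrix.mul_smul, mul_assoc, A.mul_nonsing_inv hA,
    mul_one, Aᵀ.nonsing_inv_mul_cancel_left _ hAt]

theorem mul_mul_transpose_eq_of_schrodinger (hε : ε ≠ 0) (hS : IsUnit S.det)
    (hW : IsUnit W.det) (hA : IsUnit A.det) (hF : IsUnit F.det) (hG : IsUnit G.det)
    (hFeq : F = ε • S⁻¹ + Aᵀ * G⁻¹ * A) (hGeq : G = ε • W⁻¹ + A * F⁻¹ * Aᵀ) :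
    A * S * Aᵀ = ε • (A * F⁻¹ * Aᵀ) + A * F⁻¹ * Aᵀ * W * (A * F⁻¹ * Aᵀ) := by
  have hXinv := inv_mul_inv_mul_transpose_eq hA hF hFeq
  set X := A * F⁻¹ * Aᵀ
  set M := A * S * Aᵀ
  have hX : IsUnit X.det := by
    simp only [X, det_mul, det_transpose]
    exact (hA.mul (F.isUnit_nonsing_inv_det hF)).mul hA
  have hM : IsUnit M.det := by
    simp only [M, det_mul, det_transpose]
    exact (hA.mul hS).mul hA
  have h : ε • (M * X⁻¹ * W⁻¹) = ε • G := by
    calc ε • (M * X⁻¹ * W⁻¹) = M * X⁻¹ * (G - X) := by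
          rw [hGeq, add_sub_cancel_right, Matrix.mul_smul]
      _ = M * X⁻¹ * G - M := by rw [mul_sub, X.nonsing_inv_mul_cancel_right M hX]
      _ = ε • G := by
          rw [hXinv, mul_add, Matrix.mul_smul, M.mul_nonsing_inv hM, add_mul, Matrix.smul_mul,
            one_mul, mul_assoc M, G.nonsing_inv_mul hG, mul_one, add_sub_cancel_right]
  have hGWX : M = G * W * X := by
    rw [← smul_right_injective _ hε h]
    simp only [mul_assoc, W.nonsing_inv_mul_cancel_left _ hW, X.nonsing_inv_mul hX, mul_one]
  rw [hGWX, hGeq]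
  simp only [add_mul, Matrix.smul_mul, W.nonsing_inv_mul hW, one_mul]

end SchrodingerSystem

end Matrix

/-- Let `Σ, Ω ≻ 0`, `A` invertible, `ε > 0`, and `F, G ≻ 0` solving the limiting Schrödinger
system `F = εΣ⁻¹ + AᵀG⁻¹A`, `G = εΩ⁻¹ + AF⁻¹Aᵀ`. Then `C_F := ΩAF⁻¹Aᵀ` satisfies
`C_F² + εC_F = ΩAΣAᵀ`, all (real) eigenvalues of `C_F` are positive, and
`C_F = Ω^{1/2}(Ω^{1/2}AΣAᵀΩ^{1/2} + (ε²/4)I)^{1/2}Ω^{−1/2} − (ε/2)I` (the middle square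
root being the unique positive semidefinite square root). -/
theorem stmt_17 (d : ℕ) (S W A F G : Matrix (Fin d) (Fin d) ℝ) (ε : ℝ) (hε : 0 < ε)
    (hS : S.PosDef) (hW : W.PosDef) (hA : IsUnit A.det)
    (hF : F.PosDef) (hG : G.PosDef)
    (hFeq : F = ε • S⁻¹ + Aᵀ * G⁻¹ * A) (hGeq : G = ε • W⁻¹ + A * F⁻¹ * Aᵀ) :
    (W * A * F⁻¹ * Aᵀ) * (W * A * F⁻¹ * Aᵀ) + ε • (W * A * F⁻¹ * Aᵀ) =
      W * A * S * Aᵀ ∧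
    (∀ c : ℝ, c ∈ spectrum ℝ (W * A * F⁻¹ * Aᵀ) → 0 < c) ∧
    (∀ Y : Matrix (Fin d) (Fin d) ℝ, Y.PosSemidef →
      Y * Y = Matrix.PosSemidef.sqrt hW.posSemidef * (A * S * Aᵀ) * Matrix.PosSemidef.sqrt hW.posSemidef +
        (ε ^ 2 / 4) • (1 : Matrix (Fin d) (Fin d) ℝ) →
      W * A * F⁻¹ * Aᵀ =
        Matrix.PosSemidef.sqrt hW.posSemidef * Y * (Matrix.PosSemidef.sqrt hW.posSemidef)⁻¹ -
          (ε / 2) • (1 : Matrix (Fin d) (Fin d) ℝ)) := by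
  have hX : (A * F⁻¹ * Aᵀ).PosDef := by
    simpa using hF.inv.mul_mul_conjTranspose_same
      (vecMul_injective_iff_isUnit.mpr ((isUnit_iff_isUnit_det A).mpr hA))
  have hM := mul_mul_transpose_eq_of_schrodinger hε.ne' hS.isUnit_det hW.isUnit_det hA
    hF.isUnit_det hG.isUnit_det hFeq hGeq
  rw [show W * A * F⁻¹ * Aᵀ = W * (A * F⁻¹ * Aᵀ) by simp only [mul_assoc],
    show W * A * S * Aᵀ = W * (A * S * Aᵀ) by simp only [mul_assoc], hM,
    hW.posSemidef.sqrt_eq_cfcSqrt]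
  refine ⟨by simp only [mul_add, Matrix.mul_smul, mul_assoc, add_comm],
    fun _ => hW.pos_of_mem_spectrum_mul hX,
    fun Y hY hY2 => hW.mul_eq_cfcSqrt_mul_mul_inv_sub hX.posSemidef hY hε.le hY2⟩
end
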